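/- arXiv:1708.02339 — 2 statements merged into one kernel-verified Lean document; each statement's English description precedes it below -/
import Mathlib

section
/- Fix real numbers a < 0 < b, let L : ℝ → ℝ be convex and continuous on the closed interval [a,b], let K ≥ 0, and let g : ℝ → ℝ be Lipschitz with constant K. For x ∈ ℝ and t > 0 define u(x,t) := min_{y ∈ [x − b·t, x − a·t]} ( t·L((x−y)/t) + g(y) ), and set C := max( |L(0)|, max_{z ∈ [a,b]} ( K·|z| − L(z) ) ). Then: (i) for all x, x̂ ∈ ℝ and all t, t̂ > 0 one has |u(x̂, t̂) − u(x, t)| ≤ K·|x̂ − x| + C·|t̂ − t|; and (ii) the function (x,t) ↦ u(x,t) is (totally) differentiable at Lebesgue-almost every point of ℝ × (0,∞). -/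
/-!
Substituting `y = x - t z` writes `u(x, t)` as the minimum of `t L(z) + g(x - t z)` over the
fixed interval `z ∈ [a, b]`. Moving `x` with `z` fixed costs at most `K |Δx|`. Shrinking `t` to
`t'` with `z` fixed costs at most `(t - t') (K |z| - L z)`; enlarging it to `t'`, the minimiser
`z` is replaced by `(t / t') z`, and convexity of `L` on the star-shaped interval `[a, b] ∋ 0`
bounds the cost by `(t' - t) L 0`. So `u` is Lipschitz on the open half-plane `t > 0`, and
Rademacher's theorem gives differentiability almost everywhere there.
-/

open MeasureTheory Set

lemma sInf_image_le_sInf_image_add {ι : Type*} {f g : ι → ℝ} {s : Set ι} (hs : s.Nonempty)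
    (hg : BddBelow (g '' s)) (c : ℝ) (σ : ι → ι) (hσ : MapsTo σ s s)
    (h : ∀ i ∈ s, g (σ i) ≤ f i + c) : sInf (g '' s) ≤ sInf (f '' s) + c := by
  rw [← sub_le_iff_le_add]
  refine le_csInf (hs.image f) ?_
  rintro _ ⟨i, hi, rfl⟩
  linarith [h i hi, csInf_le hg (mem_image_of_mem g (hσ hi))]

lemma LipschitzOnWith.of_dist_le_mul_add_mul {α β γ : Type*} [PseudoMetricSpace α]
    [PseudoMetricSpace β] [PseudoMetricSpace γ] {s : Set (α × β)} {f : α × β → γ} {K C : ℝ}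
    (hK : 0 ≤ K) (hC : 0 ≤ C)
    (h : ∀ p ∈ s, ∀ q ∈ s, dist (f p) (f q) ≤ K * dist p.1 q.1 + C * dist p.2 q.2) :
    LipschitzOnWith (K + C).toNNReal f s := by
  refine LipschitzOnWith.of_dist_le' fun p hp q hq => ?_
  have h₁ : dist p.1 q.1 ≤ dist p q := le_max_left _ _
  have h₂ : dist p.2 q.2 ≤ dist p q := le_max_right _ _
  calc dist (f p) (f q) ≤ K * dist p.1 q.1 + C * dist p.2 q.2 := h p hp q hq
    _ ≤ K * dist p q + C * dist p q := by gcongr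
    _ = (K + C) * dist p q := by ring

noncomputable def hopfLax (a b : ℝ) (L g : ℝ → ℝ) (x t : ℝ) : ℝ :=
  sInf ((fun y => t * L ((x - y) / t) + g y) '' Icc (x - b * t) (x - a * t))

namespace hopfLax

variable {a b : ℝ} {L g : ℝ → ℝ} {K : ℝ}

lemma eq_sInf_image_Icc {t : ℝ} (ht : 0 < t) (x : ℝ) :
    hopfLax a b L g x t = sInf ((fun z => t * L z + g (x - t * z)) '' Icc a b) := by
  have hIcc : (fun y => (x - y) / t) '' Icc (x - b * t) (x - a * t) = Icc a b := by
    rw [show (fun y => (x - y) / t) = (· * t⁻¹) ∘ (x - ·) from rfl, image_comp,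
      image_const_sub_Icc, image_mul_right_Icc' _ _ (inv_pos.2 ht)]
    congr 1 <;> field_simp <;> ring
  rw [hopfLax, ← hIcc, image_image]
  congr 2 with y
  rw [mul_div_cancel₀ _ ht.ne', sub_sub_cancel]

lemma bddBelow_image_Icc (hL : ContinuousOn L (Icc a b))
    (hg : ∀ x y, |g x - g y| ≤ K * |x - y|) (x t : ℝ) :
    BddBelow ((fun z => t * L z + g (x - t * z)) '' Icc a b) := by
  have hgc : Continuous g := (LipschitzWith.of_dist_le' hg).continuous
  refine (isCompact_Icc.image_of_continuousOn ?_).bddBelow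
  exact (continuousOn_const.mul hL).add (hgc.comp (by fun_prop)).continuousOn

lemma le_add_mul_abs_sub (hab : a ≤ b) (hL : ContinuousOn L (Icc a b))
    (hg : ∀ x y, |g x - g y| ≤ K * |x - y|) {t : ℝ} (ht : 0 < t) (x x' : ℝ) :
    hopfLax a b L g x' t ≤ hopfLax a b L g x t + K * |x' - x| := by
  rw [eq_sInf_image_Icc ht, eq_sInf_image_Icc ht]
  refine sInf_image_le_sInf_image_add (nonempty_Icc.2 hab) (bddBelow_image_Icc hL hg x' t) _
    (fun z => z) (fun _ hz => hz) fun z _ => ?_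
  have hgz := hg (x' - t * z) (x - t * z)
  rw [sub_sub_sub_cancel_right] at hgz
  linarith [le_abs_self (g (x' - t * z) - g (x - t * z))]

lemma abs_sub_le_mul_abs_sub (hab : a ≤ b) (hL : ContinuousOn L (Icc a b))
    (hg : ∀ x y, |g x - g y| ≤ K * |x - y|) {t : ℝ} (ht : 0 < t) (x x' : ℝ) :
    |hopfLax a b L g x' t - hopfLax a b L g x t| ≤ K * |x' - x| := by
  rw [abs_sub_le_iff]
  constructor
  · linarith [le_add_mul_abs_sub hab hL hg ht x x']
  · linarith [abs_sub_comm x x' ▸ le_add_mul_abs_sub hab hL hg ht x' x]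

lemma le_add_mul_sub_of_le (hab : a ≤ b) (hL : ContinuousOn L (Icc a b))
    (hg : ∀ x y, |g x - g y| ≤ K * |x - y|) {c : ℝ} (hc : ∀ z ∈ Icc a b, K * |z| - L z ≤ c)
    {t t' : ℝ} (ht : 0 < t) (htt' : t ≤ t') (x : ℝ) :
    hopfLax a b L g x t ≤ hopfLax a b L g x t' + c * (t' - t) := by
  rw [eq_sInf_image_Icc ht, eq_sInf_image_Icc (ht.trans_le htt')]
  refine sInf_image_le_sInf_image_add (nonempty_Icc.2 hab) (bddBelow_image_Icc hL hg x t) _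
    (fun z => z) (fun _ hz => hz) fun z hz => ?_
  have hgz := hg (x - t * z) (x - t' * z)
  rw [show x - t * z - (x - t' * z) = (t' - t) * z by ring, abs_mul,
    abs_of_nonneg (sub_nonneg.2 htt')] at hgz
  have hcz := mul_le_mul_of_nonneg_left (hc z hz) (sub_nonneg.2 htt')
  linarith [le_abs_self (g (x - t * z) - g (x - t' * z))]

lemma le_add_apply_zero_mul_sub_of_le (h0 : (0 : ℝ) ∈ Icc a b) (hLconv : ConvexOn ℝ (Icc a b) L)
    (hL : ContinuousOn L (Icc a b)) (hg : ∀ x y, |g x - g y| ≤ K * |x - y|)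
    {t t' : ℝ} (ht : 0 < t) (htt' : t ≤ t') (x : ℝ) :
    hopfLax a b L g x t' ≤ hopfLax a b L g x t + L 0 * (t' - t) := by
  have ht' : 0 < t' := ht.trans_le htt'
  have hs : t / t' ∈ Icc (0 : ℝ) 1 := ⟨by positivity, (div_le_one ht').2 htt'⟩
  rw [eq_sInf_image_Icc ht, eq_sInf_image_Icc ht']
  refine sInf_image_le_sInf_image_add (nonempty_Icc.2 (h0.1.trans h0.2))
    (bddBelow_image_Icc hL hg x t') _ (fun z => (t / t') * z)
    (fun z hz => (convex_Icc a b).smul_mem_of_zero_mem h0 hz hs) fun z hz => ?_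
  have hconv := hLconv.2 hz h0 hs.1 (sub_nonneg.2 hs.2) (add_sub_cancel _ _)
  simp only [smul_eq_mul, mul_zero, add_zero] at hconv
  have key : t' * L (t / t' * z) ≤ t * L z + (t' - t) * L 0 := by
    calc t' * L (t / t' * z) ≤ t' * (t / t' * L z + (1 - t / t') * L 0) := by gcongr
      _ = t * L z + (t' - t) * L 0 := by field_simp
  rw [show t' * (t / t' * z) = t * z by field_simp]
  linarith

lemma abs_sub_le_mul_sub_of_le (h0 : (0 : ℝ) ∈ Icc a b) (hLconv : ConvexOn ℝ (Icc a b) L)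
    (hL : ContinuousOn L (Icc a b)) (hg : ∀ x y, |g x - g y| ≤ K * |x - y|) {c : ℝ}
    (hc : ∀ z ∈ Icc a b, K * |z| - L z ≤ c) (hc₀ : L 0 ≤ c) {t t' : ℝ} (ht : 0 < t)
    (htt' : t ≤ t') (x : ℝ) :
    |hopfLax a b L g x t' - hopfLax a b L g x t| ≤ c * (t' - t) := by
  have hshrink := le_add_mul_sub_of_le (h0.1.trans h0.2) hL hg hc ht htt' x
  have hgrow := le_add_apply_zero_mul_sub_of_le h0 hLconv hL hg ht htt' x
  have := mul_le_mul_of_nonneg_right hc₀ (sub_nonneg.2 htt')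
  rw [abs_sub_le_iff]
  constructor <;> linarith

lemma abs_sub_le (h0 : (0 : ℝ) ∈ Icc a b) (hLconv : ConvexOn ℝ (Icc a b) L)
    (hL : ContinuousOn L (Icc a b)) (hg : ∀ x y, |g x - g y| ≤ K * |x - y|) {c : ℝ}
    (hc : ∀ z ∈ Icc a b, K * |z| - L z ≤ c) (hc₀ : L 0 ≤ c) {t t' : ℝ} (ht : 0 < t)
    (ht' : 0 < t') (x x' : ℝ) :
    |hopfLax a b L g x' t' - hopfLax a b L g x t| ≤ K * |x' - x| + c * |t' - t| := by
  have htime : |hopfLax a b L g x' t' - hopfLax a b L g x' t| ≤ c * |t' - t| := by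
    rcases le_total t t' with htt' | ht't
    · rw [abs_of_nonneg (sub_nonneg.2 htt')]
      exact abs_sub_le_mul_sub_of_le h0 hLconv hL hg hc hc₀ ht htt' x'
    · rw [abs_sub_comm, abs_sub_comm t', abs_of_nonneg (sub_nonneg.2 ht't)]
      exact abs_sub_le_mul_sub_of_le h0 hLconv hL hg hc hc₀ ht' ht't x'
  calc |hopfLax a b L g x' t' - hopfLax a b L g x t|
      ≤ |hopfLax a b L g x' t' - hopfLax a b L g x' t|
        + |hopfLax a b L g x' t - hopfLax a b L g x t| := _root_.abs_sub_le _ _ _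
    _ ≤ c * |t' - t| + K * |x' - x| :=
        add_le_add htime (abs_sub_le_mul_abs_sub (h0.1.trans h0.2) hL hg ht x x')
    _ = K * |x' - x| + c * |t' - t| := add_comm _ _

end hopfLax

/-- Lemma 3.5(b),(c) (Lemma C, parts (b) and (c)): joint Lipschitz continuity of
the Hopf–Lax function on `ℝ × (0,∞)`, and almost-everywhere (total)
differentiability there. -/
theorem stmt7 (a b : ℝ) (ha : a < 0) (hb : 0 < b) (L : ℝ → ℝ)
    (hLconv : ConvexOn ℝ (Set.Icc a b) L) (hLcont : ContinuousOn L (Set.Icc a b))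
    (K : ℝ) (hK : 0 ≤ K) (g : ℝ → ℝ) (hg : ∀ x y : ℝ, |g x - g y| ≤ K * |x - y|) :
    let u : ℝ → ℝ → ℝ := fun x t =>
      sInf ((fun y => t * L ((x - y) / t) + g y) '' Set.Icc (x - b * t) (x - a * t))
    let C : ℝ := max |L 0| (sSup ((fun z => K * |z| - L z) '' Set.Icc a b))
    (∀ x x2 : ℝ, ∀ t > (0 : ℝ), ∀ t2 > (0 : ℝ),
      |u x2 t2 - u x t| ≤ K * |x2 - x| + C * |t2 - t|) ∧
    (∀ᵐ p : ℝ × ℝ ∂volume, 0 < p.2 →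
      DifferentiableAt ℝ (fun q : ℝ × ℝ => u q.1 q.2) p) := by
  intro u C
  have h0 : (0 : ℝ) ∈ Icc a b := ⟨ha.le, hb.le⟩
  have hC : ∀ z ∈ Icc a b, K * |z| - L z ≤ C := fun z hz =>
    (le_csSup (isCompact_Icc.image_of_continuousOn
      ((continuous_const.mul continuous_abs).continuousOn.sub hLcont)).bddAbove
      (mem_image_of_mem _ hz)).trans (le_max_right _ _)
  have hL0 : L 0 ≤ C := (le_abs_self _).trans (le_max_left _ _)
  have hlip : ∀ x x2 : ℝ, ∀ t > (0 : ℝ), ∀ t2 > (0 : ℝ),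
      |u x2 t2 - u x t| ≤ K * |x2 - x| + C * |t2 - t| :=
    fun x x2 t ht t2 ht2 => hopfLax.abs_sub_le h0 hLconv hLcont hg hC hL0 ht ht2 x x2
  refine ⟨hlip, ?_⟩
  have hlipOn : LipschitzOnWith (K + C).toNNReal (fun q : ℝ × ℝ => u q.1 q.2) {q | 0 < q.2} :=
    .of_dist_le_mul_add_mul hK ((abs_nonneg _).trans (le_max_left _ _))
      fun p hp q hq => hlip _ _ _ hq _ hp
  have hopen : IsOpen {q : ℝ × ℝ | 0 < q.2} := isOpen_lt continuous_const continuous_snd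
  filter_upwards [hlipOn.ae_differentiableWithinAt_of_mem] with p hp hp₂
  exact (hp hp₂).differentiableAt (hopen.mem_nhds hp₂)
end

section
/- Fix real numbers a < 0 < b, let L : ℝ → ℝ be convex and continuous on the closed interval [a,b], let g : ℝ → ℝ be differentiable, and fix t > 0. Let y*(·,t) : ℝ → ℝ be the greatest-minimizer function, where y*(x,t) is the supremum of the set of minimizers of y ↦ t·L((x−y)/t) + g(y) over [x − b·t, x − a·t] (this supremum is itself a minimizer, and x ↦ y*(x,t) is nondecreasing). If the derivative g' : ℝ → ℝ has bounded variation on ℝ, then the function x ↦ g'( y*(x,t) ) has bounded variation on ℝ. -/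
/-!
The greatest minimizer `y*(x)` of the Hopf–Lax cost `t L((x - y)/t) + g y` is nondecreasing in `x`:
the cost has the Monge property `c x₂ y₁ + c x₁ y₂ ≤ c x₁ y₁ + c x₂ y₂` for `x₁ < x₂`, `y₂ < y₁`
(the convexity of `L` applied to four points with equal sums), so if `y*(x₂) < y*(x₁)` then
`y*(x₁)` would also be a minimizer at `x₂`, contradicting maximality. Composing a function of
bounded variation with a monotone map does not increase its variation.
-/

open Set

theorem ConvexOn.map_add_map_le_of_add_eq {𝕜 β : Type*} [Field 𝕜] [LinearOrder 𝕜]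
    [IsStrictOrderedRing 𝕜] [AddCommMonoid β] [PartialOrder β] [IsOrderedAddMonoid β]
    [Module 𝕜 β] {s : Set 𝕜} {f : 𝕜 → β} (hf : ConvexOn 𝕜 s f) {u v w z : 𝕜}
    (hu : u ∈ s) (hz : z ∈ s) (huv : u ≤ v) (hvz : v ≤ z) (hsum : u + z = v + w) :
    f v + f w ≤ f u + f z := by
  rcases huv.eq_or_lt with rfl | huv
  · obtain rfl : w = z := by linarith
    rw [add_comm]
  set θ := (z - v) / (z - u) with hθ
  have hzu : 0 < z - u := by linarith
  have hθ₀ : 0 ≤ θ := div_nonneg (by linarith) hzu.le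
  have hθ₁ : 0 ≤ 1 - θ := by rw [sub_nonneg, hθ, div_le_one hzu]; linarith
  have hθu : θ * (z - u) = z - v := div_mul_cancel₀ _ hzu.ne'
  have hv : θ • u + (1 - θ) • z = v := by simp only [smul_eq_mul]; linear_combination -hθu
  have hw : (1 - θ) • u + θ • z = w := by simp only [smul_eq_mul]; linear_combination hθu + hsum
  calc f v + f w
      ≤ (θ • f u + (1 - θ) • f z) + ((1 - θ) • f u + θ • f z) :=
        add_le_add (hv ▸ hf.2 hu hz hθ₀ hθ₁ (by ring)) (hw ▸ hf.2 hu hz hθ₁ hθ₀ (by ring))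
    _ = f u + f z := by
        rw [add_add_add_comm, ← add_smul, ← add_smul, add_sub_cancel, sub_add_cancel, one_smul,
          one_smul]

/-- Topkis' monotonicity theorem for greatest minimizers. -/
theorem monotone_of_greatest_minimizer {α β γ : Type*} [LinearOrder α] [LinearOrder β]
    [AddCommMonoid γ] [PartialOrder γ] [IsOrderedCancelAddMonoid γ]
    {c : α → β → γ} {I : α → Set β} {ystar : α → β}
    (hI : ∀ ⦃x₁ x₂ y₁ y₂⦄, x₁ < x₂ → y₂ < y₁ → y₁ ∈ I x₁ → y₂ ∈ I x₂ → y₁ ∈ I x₂ ∧ y₂ ∈ I x₁)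
    (hc : ∀ ⦃x₁ x₂ y₁ y₂⦄, x₁ < x₂ → y₂ < y₁ → y₁ ∈ I x₁ → y₂ ∈ I x₂ →
      c x₂ y₁ + c x₁ y₂ ≤ c x₁ y₁ + c x₂ y₂)
    (hmem : ∀ x, ystar x ∈ I x) (hmin : ∀ x, ∀ z ∈ I x, c x (ystar x) ≤ c x z)
    (hgreatest : ∀ x, ∀ y ∈ I x, (∀ z ∈ I x, c x y ≤ c x z) → y ≤ ystar x) :
    Monotone ystar := by
  intro x₁ x₂ hx
  rcases hx.eq_or_lt with rfl | hx
  · rfl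
  by_contra! hlt
  obtain ⟨h₁₂, h₂₁⟩ := hI hx hlt (hmem x₁) (hmem x₂)
  have hbetter : c x₂ (ystar x₁) ≤ c x₂ (ystar x₂) :=
    le_of_add_le_add_right <| calc
      c x₂ (ystar x₁) + c x₁ (ystar x₂) ≤ c x₁ (ystar x₁) + c x₂ (ystar x₂) :=
        hc hx hlt (hmem x₁) (hmem x₂)
      _ ≤ c x₁ (ystar x₂) + c x₂ (ystar x₂) := add_le_add_left (hmin x₁ _ h₂₁) _
      _ = c x₂ (ystar x₂) + c x₁ (ystar x₂) := add_comm _ _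
  exact hlt.not_ge <| hgreatest x₂ _ h₁₂ fun z hz => hbetter.trans (hmin x₂ z hz)

theorem BoundedVariationOn.comp_monotoneOn {α β E : Type*} [LinearOrder α] [LinearOrder β]
    [PseudoEMetricSpace E] {f : α → E} {s : Set α} {t : Set β} {φ : β → α}
    (hf : BoundedVariationOn f s) (hφ : MonotoneOn φ t) (hφst : MapsTo φ t s) :
    BoundedVariationOn (f ∘ φ) t :=
  ne_top_of_le_ne_top hf (eVariationOn.comp_le_of_monotoneOn f φ hφ hφst)

section HopfLax

variable {a b t : ℝ} {L g : ℝ → ℝ}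

theorem div_mem_Icc_of_mem_Icc_sub_mul (ht : 0 < t) {x y : ℝ}
    (hy : y ∈ Icc (x - b * t) (x - a * t)) : (x - y) / t ∈ Icc a b := by
  constructor
  · rw [le_div_iff₀ ht]; linarith [hy.2]
  · rw [div_le_iff₀ ht]; linarith [hy.1]

theorem hopfLax_cost_monge (hL : ConvexOn ℝ (Icc a b) L) (ht : 0 < t) {x₁ x₂ y₁ y₂ : ℝ}
    (hx : x₁ ≤ x₂) (hy : y₂ ≤ y₁) (hy₁ : y₁ ∈ Icc (x₁ - b * t) (x₁ - a * t))
    (hy₂ : y₂ ∈ Icc (x₂ - b * t) (x₂ - a * t)) :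
    (t * L ((x₂ - y₁) / t) + g y₁) + (t * L ((x₁ - y₂) / t) + g y₂) ≤
      (t * L ((x₁ - y₁) / t) + g y₁) + (t * L ((x₂ - y₂) / t) + g y₂) := by
  have hL4 := hL.map_add_map_le_of_add_eq (div_mem_Icc_of_mem_Icc_sub_mul ht hy₁)
    (div_mem_Icc_of_mem_Icc_sub_mul ht hy₂)
    (div_le_div_of_nonneg_right (by linarith) ht.le)
    (div_le_div_of_nonneg_right (by linarith) ht.le)
    (show (x₁ - y₁) / t + (x₂ - y₂) / t = (x₂ - y₁) / t + (x₁ - y₂) / t by ring)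
  linarith [mul_le_mul_of_nonneg_left hL4 ht.le]

theorem Icc_sub_mul_exchange {x₁ x₂ y₁ y₂ : ℝ} (hx : x₁ ≤ x₂) (hy : y₂ ≤ y₁)
    (hy₁ : y₁ ∈ Icc (x₁ - b * t) (x₁ - a * t)) (hy₂ : y₂ ∈ Icc (x₂ - b * t) (x₂ - a * t)) :
    y₁ ∈ Icc (x₂ - b * t) (x₂ - a * t) ∧ y₂ ∈ Icc (x₁ - b * t) (x₁ - a * t) := by
  obtain ⟨hy₁l, hy₁u⟩ := hy₁
  obtain ⟨hy₂l, hy₂u⟩ := hy₂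
  exact ⟨⟨by linarith, by linarith⟩, ⟨by linarith, by linarith⟩⟩

end HopfLax

theorem stmt16_general (a b : ℝ) (L : ℝ → ℝ)
    (hLconv : ConvexOn ℝ (Set.Icc a b) L)
    (g : ℝ → ℝ) (t : ℝ) (ht : 0 < t)
    (ystar : ℝ → ℝ)
    (hmem : ∀ x : ℝ, ystar x ∈ Set.Icc (x - b * t) (x - a * t))
    (hmin : ∀ x : ℝ, ∀ z ∈ Set.Icc (x - b * t) (x - a * t),
      t * L ((x - ystar x) / t) + g (ystar x) ≤ t * L ((x - z) / t) + g z)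
    (hgreatest : ∀ x : ℝ, ∀ y ∈ Set.Icc (x - b * t) (x - a * t),
      (∀ z ∈ Set.Icc (x - b * t) (x - a * t),
        t * L ((x - y) / t) + g y ≤ t * L ((x - z) / t) + g z) → y ≤ ystar x)
    (hBV : BoundedVariationOn (deriv g) Set.univ) :
    BoundedVariationOn (fun x => deriv g (ystar x)) Set.univ := by
  have hmono : Monotone ystar :=
    monotone_of_greatest_minimizer (c := fun x y => t * L ((x - y) / t) + g y)
      (fun _ _ _ _ hx hy => Icc_sub_mul_exchange hx.le hy.le)
      (fun _ _ _ _ hx hy => hopfLax_cost_monge hLconv ht hx.le hy.le)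
      hmem hmin hgreatest
  exact hBV.comp_monotoneOn (hmono.monotoneOn _) (mapsTo_univ _ _)

/-- Theorem 4.4: if the initial datum `g'` has bounded variation on `ℝ`, then
so does the solution `w(·,t) = g'(y*(·,t))`, where `y*(·,t)` is the greatest
minimizer of the Hopf–Lax functional for fixed `t > 0`. -/
theorem stmt16 (a b : ℝ) (ha : a < 0) (hb : 0 < b) (L : ℝ → ℝ)
    (hLconv : ConvexOn ℝ (Set.Icc a b) L) (hLcont : ContinuousOn L (Set.Icc a b))
    (g : ℝ → ℝ) (hg : Differentiable ℝ g) (t : ℝ) (ht : 0 < t)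
    (ystar : ℝ → ℝ)
    (hmem : ∀ x : ℝ, ystar x ∈ Set.Icc (x - b * t) (x - a * t))
    (hmin : ∀ x : ℝ, ∀ z ∈ Set.Icc (x - b * t) (x - a * t),
      t * L ((x - ystar x) / t) + g (ystar x) ≤ t * L ((x - z) / t) + g z)
    (hgreatest : ∀ x : ℝ, ∀ y ∈ Set.Icc (x - b * t) (x - a * t),
      (∀ z ∈ Set.Icc (x - b * t) (x - a * t),
        t * L ((x - y) / t) + g y ≤ t * L ((x - z) / t) + g z) → y ≤ ystar x)
    (hBV : BoundedVariationOn (deriv g) Set.univ) :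
    BoundedVariationOn (fun x => deriv g (ystar x)) Set.univ :=
  stmt16_general a b L hLconv g t ht ystar hmem hmin hgreatest hBV
end
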